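/- Let N ∈ ℕ and let F: Ω → ℝ be a smooth function, where Ω = {(a₀, a₁, …, a_N) ∈ ℝ^{N+1} : a₀ > 0 and a₁ > 0}. Suppose that for every smooth function v: ℝ → ℝ, every point x with (v(x), v′(x), …, v^{(N)}(x)) ∈ Ω, and every λ ∈ (0, v(x)²), one has ∑_{s=0}^{N} K^s(x, λ) · (∂F/∂a_s)(v(x), v′(x), …, v^{(N)}(x)) = 0. Then F is constant on Ω. (This is the one-dimensional instance of the theorem that a function on the jet space annihilated by all loop-equation coefficient fields K^{γ,s} is constant, which yields uniqueness of the solution of the loop equation up to additive constants.) -/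

import Mathlib

/-- The coefficient functions `K^s(x, λ)` of the loop equation of the one-dimensional
generalized Frobenius manifold with potential `F = v⁴/12`. -/
noncomputable def Kcoef (v : ℝ → ℝ) (s : ℕ) (x lam : ℝ) : ℝ :=
  iteratedDeriv s (fun y => 1 / (2 * v y * ((v y) ^ 2 - lam))) x
    + (s : ℝ) * iteratedDeriv s
        (fun y => (1 / (2 * lam)) * (((v y) ^ 2 - lam) ^ (-(1 / 2 : ℝ)) - 1 / v y)) x
    + ∑ k ∈ Finset.Icc 1 s,
        (Nat.choose s k : ℝ)
          * iteratedDeriv (k - 1)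
              (fun y => (1 / (2 * lam)) * (v y * ((v y) ^ 2 - lam) ^ (-(1 / 2 : ℝ)) - 1)) x
          * iteratedDeriv (s + 1 - k)
              (fun y => ((v y) ^ 2 - lam) ^ (-(1 / 2 : ℝ))) x


open Filter Topology Set Finset
open scoped ContDiff


noncomputable section LoopEq

/-- coefficient functions in the representation of iterated derivatives -/
def Gseq (v : ℝ → ℝ) (e0 : ℝ) (g0 : ℝ → ℝ) : ℕ → ℕ → ℝ → ℝ
  | 0, 0 => g0
  | 0, _+1 => fun _ => 0
  | j+1, 0 => deriv (Gseq v e0 g0 j 0)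
  | j+1, m+1 => fun y =>
      deriv (Gseq v e0 g0 j (m+1)) y
        + 2*(e0 - m) * v y * deriv v y * Gseq v e0 g0 j m y

def Vpos (v : ℝ → ℝ) : Set ℝ := {y | 0 < v y}

def Ureg (v : ℝ → ℝ) (lam : ℝ) : Set ℝ := {y | 0 < v y ∧ lam < v y ^ 2}

lemma isOpen_Vpos {v : ℝ → ℝ} (hv : Continuous v) : IsOpen (Vpos v) :=
  isOpen_Ioi.preimage hv

lemma isOpen_Ureg {v : ℝ → ℝ} (hv : Continuous v) (lam : ℝ) : IsOpen (Ureg v lam) :=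
  (isOpen_Ioi.preimage hv).inter (isOpen_Ioi.preimage ((hv.pow 2)))

lemma Ureg_subset {v : ℝ → ℝ} {lam : ℝ} : Ureg v lam ⊆ Vpos v := fun _ h => h.1

lemma contDiffOn_Gseq {v : ℝ → ℝ} (hv : ContDiff ℝ ∞ v) (e0 : ℝ) {g0 : ℝ → ℝ}
    (hg0 : ContDiffOn ℝ ∞ g0 (Vpos v)) :
    ∀ j m, ContDiffOn ℝ ∞ (Gseq v e0 g0 j m) (Vpos v) := by
  have hVo : IsOpen (Vpos v) := isOpen_Vpos hv.continuous
  intro j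
  induction j with
  | zero =>
    intro m; cases m with
    | zero => exact hg0
    | succ m => exact contDiffOn_const
  | succ j ih =>
    intro m; cases m with
    | zero => exact (ih 0).deriv_of_isOpen hVo (by exact_mod_cast le_refl ∞)
    | succ m =>
      refine ContDiffOn.add (((ih (m+1)).deriv_of_isOpen hVo (by exact_mod_cast le_refl ∞))) ?_
      exact ((((contDiffOn_const.mul hv.contDiffOn)).mul
        ((contDiff_infty_iff_deriv.mp hv).2.contDiffOn)).mul (ih m))

lemma Gseq_vanish {v : ℝ → ℝ} (e0 : ℝ) (g0 : ℝ → ℝ) :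
    ∀ j m, j < m → Gseq v e0 g0 j m = fun _ => 0 := by
  intro j
  induction j with
  | zero =>
    intro m hm
    match m, hm with
    | m+1, _ => rfl
  | succ j ih =>
    intro m hm
    match m, hm with
    | m+1, hm =>
      have h1 : Gseq v e0 g0 j (m+1) = fun _ => 0 := ih (m+1) (by omega)
      have h2 : Gseq v e0 g0 j m = fun _ => 0 := ih m (by omega)
      funext y
      show deriv (Gseq v e0 g0 j (m+1)) y + 2*(e0 - m) * v y * deriv v y * Gseq v e0 g0 j m y = 0
      rw [h1, h2]
      simp

lemma Gseq_diag {v : ℝ → ℝ} (e0 : ℝ) (g0 : ℝ → ℝ) :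
    ∀ j, Gseq v e0 g0 j j =
      fun y => (∏ i ∈ Finset.range j, (2*(e0 - i))) * (v y * deriv v y)^j * g0 y := by
  intro j
  induction j with
  | zero => funext y; simp [Gseq]
  | succ j ih =>
    funext y
    show deriv (Gseq v e0 g0 j (j+1)) y + 2*(e0 - j) * v y * deriv v y * Gseq v e0 g0 j j y = _
    rw [Gseq_vanish e0 g0 j (j+1) (by omega)]
    rw [ih]
    simp only [deriv_const']
    rw [Finset.prod_range_succ]
    push_cast
    ring



lemma contDiffOn_iterate_deriv {v : ℝ → ℝ} (hv : ContDiff ℝ ∞ v) {r0 : ℝ → ℝ}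
    (hr0 : ContDiffOn ℝ ∞ r0 (Vpos v)) :
    ∀ j, ContDiffOn ℝ ∞ (deriv^[j] r0) (Vpos v) := by
  intro j
  induction j with
  | zero => exact hr0
  | succ j ih =>
    rw [Function.iterate_succ_apply']
    exact ih.deriv_of_isOpen (isOpen_Vpos hv.continuous) (by exact_mod_cast le_refl ∞)

lemma hasDerivAt_of_contDiffOn_Vpos {v : ℝ → ℝ} (hv : ContDiff ℝ ∞ v) {g : ℝ → ℝ}
    (hg : ContDiffOn ℝ ∞ g (Vpos v)) {y : ℝ} (hy : y ∈ Vpos v) :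
    HasDerivAt g (deriv g y) y := by
  have h1 : DifferentiableOn ℝ g (Vpos v) :=
    hg.differentiableOn (by simp)
  exact (h1.differentiableAt ((isOpen_Vpos hv.continuous).mem_nhds hy)).hasDerivAt

lemma sum_regroup (X W e0 : ℝ) (j : ℕ) (G D H : ℕ → ℝ) (hD0 : D (j+1) = 0)
    (hH0 : H 0 = D 0) (hHs : ∀ m, H (m+1) = D (m+1) + W * (e0 - m) * G m) :
    ∑ m ∈ Finset.range (j+1),
        (D m * X ^ (e0 - m) + G m * (W * (e0 - m) * X ^ (e0 - m - 1)))
      = ∑ m ∈ Finset.range (j+1+1), H m * X ^ (e0 - m) := by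
  have e1 : ∀ m : ℕ, e0 - (↑(m+1) : ℝ) = e0 - m - 1 := by intro m; push_cast; ring
  rw [Finset.sum_add_distrib]
  rw [Finset.sum_range_succ' (fun m => H m * X ^ (e0 - m)) (j+1)]
  rw [Finset.sum_range_succ' (fun m => D m * X ^ (e0 - m)) j]
  rw [Finset.sum_range_succ (fun m => H (m+1) * X ^ (e0 - (↑(m+1) : ℕ))) j]
  simp only [hHs, hH0, hD0, e1, Nat.cast_zero, sub_zero, zero_add, zero_mul, add_zero,
    add_mul]
  rw [Finset.sum_add_distrib]
  rw [Finset.sum_range_succ (fun m => G m * (W * (e0 - m) * X ^ (e0 - m - 1))) j]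
  have hGsum : (∑ x ∈ Finset.range j, G x * (W * (e0 - x) * X ^ (e0 - x - 1)))
      = ∑ x ∈ Finset.range j, W * (e0 - x) * G x * X ^ (e0 - x - 1) :=
    Finset.sum_congr rfl (fun m _ => by ring)
  rw [hGsum]
  ring

theorem rep_iteratedDeriv {v : ℝ → ℝ} (hv : ContDiff ℝ ∞ v) (e0 : ℝ) {g0 r0 : ℝ → ℝ}
    (hg0 : ContDiffOn ℝ ∞ g0 (Vpos v)) (hr0 : ContDiffOn ℝ ∞ r0 (Vpos v))
    (c : ℝ → ℝ) (f : ℝ → ℝ → ℝ)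
    (hf : ∀ lam, 0 < lam → ∀ y ∈ Ureg v lam,
      f lam y = c lam * (r0 y + g0 y * (v y ^ 2 - lam) ^ e0)) :
    ∀ j lam, 0 < lam → ∀ y ∈ Ureg v lam,
      iteratedDeriv j (f lam) y = c lam * (deriv^[j] r0 y
        + ∑ m ∈ Finset.range (j+1),
            Gseq v e0 g0 j m y * (v y ^ 2 - lam) ^ (e0 - m)) := by
  intro j
  induction j with
  | zero =>
    intro lam hlam y hy
    rw [iteratedDeriv_zero, hf lam hlam y hy]
    simp [Gseq]
  | succ j ih =>
    intro lam hlam y hy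
    have hUo : IsOpen (Ureg v lam) := isOpen_Ureg hv.continuous lam
    have hloc : iteratedDeriv j (f lam) =ᶠ[𝓝 y]
        fun z => c lam * (deriv^[j] r0 z
          + ∑ m ∈ Finset.range (j+1),
              Gseq v e0 g0 j m z * (v z ^ 2 - lam) ^ (e0 - m)) := by
      filter_upwards [hUo.mem_nhds hy] with z hz using ih lam hlam z hz
    rw [iteratedDeriv_succ, hloc.deriv_eq]
    -- now compute the derivative of the representation at y
    have hyV : y ∈ Vpos v := Ureg_subset hy
    have hXpos : 0 < v y ^ 2 - lam := sub_pos.mpr hy.2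
    have hXne : v y ^ 2 - lam ≠ 0 := ne_of_gt hXpos
    have hvy : HasDerivAt v (deriv v y) y :=
      ((hv.differentiable (by simp)) y).hasDerivAt
    have hX : HasDerivAt (fun z => v z ^ 2 - lam) (2 * v y * deriv v y) y := by
      have := (hvy.pow 2).sub_const lam
      simpa [mul_comm, mul_assoc, mul_left_comm] using this
    have hpow : ∀ p : ℝ, HasDerivAt (fun z => (v z ^ 2 - lam) ^ p)
        ((2 * v y * deriv v y) * p * (v y ^ 2 - lam) ^ (p - 1)) y :=
      fun p => hX.rpow_const (Or.inl hXne)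
    have hterm : ∀ m ∈ Finset.range (j+1),
        HasDerivAt (fun z => Gseq v e0 g0 j m z * (v z ^ 2 - lam) ^ (e0 - m))
          (deriv (Gseq v e0 g0 j m) y * (v y ^ 2 - lam) ^ (e0 - m)
            + Gseq v e0 g0 j m y
              * ((2 * v y * deriv v y) * (e0 - m) * (v y ^ 2 - lam) ^ (e0 - m - 1))) y := by
      intro m _
      exact (hasDerivAt_of_contDiffOn_Vpos hv (contDiffOn_Gseq hv e0 hg0 j m) hyV).mul
        (hpow (e0 - m))
    have hr : HasDerivAt (deriv^[j] r0) (deriv^[j+1] r0 y) y := by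
      have := hasDerivAt_of_contDiffOn_Vpos hv (contDiffOn_iterate_deriv hv hr0 j) hyV
      rwa [← Function.iterate_succ_apply' deriv j r0] at this
    have hsum : HasDerivAt (fun z => deriv^[j] r0 z
        + ∑ m ∈ Finset.range (j+1),
            Gseq v e0 g0 j m z * (v z ^ 2 - lam) ^ (e0 - m))
        (deriv^[j+1] r0 y
          + ∑ m ∈ Finset.range (j+1),
            (deriv (Gseq v e0 g0 j m) y * (v y ^ 2 - lam) ^ (e0 - m)
              + Gseq v e0 g0 j m y
                * ((2 * v y * deriv v y) * (e0 - m) * (v y ^ 2 - lam) ^ (e0 - m - 1)))) y :=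
      hr.add (HasDerivAt.fun_sum hterm)
    rw [(hsum.const_mul (c lam)).deriv]
    -- algebraic regrouping
    congr 1
    congr 1
    exact sum_regroup (v y ^ 2 - lam) (2 * v y * deriv v y) e0 j
      (fun m => Gseq v e0 g0 j m y) (fun m => deriv (Gseq v e0 g0 j m) y)
      (fun m => Gseq v e0 g0 (j+1) m y)
      (by show deriv (Gseq v e0 g0 j (j+1)) y = 0
          rw [Gseq_vanish e0 g0 j (j+1) (by omega)]; simp)
      rfl
      (fun m => by
        show Gseq v e0 g0 (j+1) (m+1) y = _
        simp only [Gseq]; ring)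

lemma tendsto_eps_rpow {w2 : ℝ} (hw : 0 < w2) (q : ℝ) (hq : 0 ≤ q) :
    Tendsto (fun lam => (w2 - lam) ^ q) (𝓝[<] w2) (𝓝 (if q = 0 then 1 else 0)) := by
  by_cases h0 : q = 0
  · simp only [h0, Real.rpow_zero, if_pos rfl]
    exact tendsto_const_nhds
  · have hcont : ContinuousAt (fun t : ℝ => t ^ q) 0 :=
      Real.continuousAt_rpow_const 0 q (Or.inr hq)
    have h1 : Tendsto (fun lam : ℝ => w2 - lam) (𝓝[<] w2) (𝓝 0) := by
      have h2 : Tendsto (fun lam : ℝ => w2 - lam) (𝓝 w2) (𝓝 (w2 - w2)) :=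
        tendsto_const_nhds.sub tendsto_id
      simpa using h2.mono_left nhdsWithin_le_nhds
    have h3 := (hcont.tendsto.comp h1)
    simp only [Function.comp_def, Real.zero_rpow h0, if_neg h0] at h3 ⊢
    exact h3

theorem rep_tendsto {v : ℝ → ℝ} (hv : ContDiff ℝ ∞ v) (e0 : ℝ) (he0 : e0 < 0)
    {g0 r0 : ℝ → ℝ}
    (hg0 : ContDiffOn ℝ ∞ g0 (Vpos v)) (hr0 : ContDiffOn ℝ ∞ r0 (Vpos v))
    (c : ℝ → ℝ) (f : ℝ → ℝ → ℝ)
    (hf : ∀ lam, 0 < lam → ∀ y ∈ Ureg v lam,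
      f lam y = c lam * (r0 y + g0 y * (v y ^ 2 - lam) ^ e0))
    (hv0 : 0 < v 0)
    (j : ℕ) (ν : ℝ) (hν : (j : ℝ) - e0 ≤ ν) {climit : ℝ}
    (hc : Tendsto c (𝓝[<] (v 0 ^ 2)) (𝓝 climit)) :
    Tendsto (fun lam => (v 0 ^ 2 - lam) ^ ν * iteratedDeriv j (f lam) 0)
      (𝓝[<] (v 0 ^ 2))
      (𝓝 (if ν = (j : ℝ) - e0 then climit * Gseq v e0 g0 j j 0 else 0)) := by
  set w2 := v 0 ^ 2 with hw2
  have hw2pos : 0 < w2 := by positivity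
  have hmem : Set.Ioo (w2/2) w2 ∈ 𝓝[<] w2 :=
    Ioo_mem_nhdsLT_of_mem ⟨by linarith, le_rfl⟩
  set R : ℝ := deriv^[j] r0 0 with hR
  set b : ℕ → ℝ := fun m => Gseq v e0 g0 j m 0 with hb
  have hνpos : 0 < ν := by
    have h1 : (0:ℝ) ≤ (j:ℝ) := Nat.cast_nonneg j
    linarith
  -- the "nice" function
  have key : Tendsto (fun lam => c lam * (R * (w2 - lam) ^ ν
      + ∑ m ∈ Finset.range (j+1), b m * (w2 - lam) ^ (ν + (e0 - m))))
      (𝓝[<] w2)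
      (𝓝 (climit * (R * 0
        + ∑ m ∈ Finset.range (j+1), b m * (if ν + (e0 - (m:ℝ)) = 0 then 1 else 0)))) := by
    refine hc.mul (Tendsto.add ?_ ?_)
    · have := (tendsto_eps_rpow hw2pos ν hνpos.le).const_mul R
      simpa [if_neg hνpos.ne'] using this
    · refine tendsto_finset_sum _ (fun m hm => ?_)
      have hq : 0 ≤ ν + (e0 - (m:ℝ)) := by
        have hmj : (m:ℝ) ≤ j := by
          exact_mod_cast Nat.lt_succ_iff.mp (Finset.mem_range.mp hm)
        linarith
      exact (tendsto_eps_rpow hw2pos _ hq).const_mul (b m)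
  have heq : ∀ lam ∈ Set.Ioo (w2/2) w2,
      c lam * (R * (w2 - lam) ^ ν
        + ∑ m ∈ Finset.range (j+1), b m * (w2 - lam) ^ (ν + (e0 - m)))
      = (w2 - lam) ^ ν * iteratedDeriv j (f lam) 0 := by
    intro lam hlam
    have hlam0 : 0 < lam := lt_trans (by positivity) hlam.1
    have h0U : (0:ℝ) ∈ Ureg v lam := ⟨hv0, hlam.2⟩
    have hεpos : 0 < w2 - lam := by have := hlam.2; dsimp [w2]; linarith
    rw [rep_iteratedDeriv hv e0 hg0 hr0 c f hf j lam hlam0 0 h0U, ← hw2]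
    simp only [hb, hR]
    have hterm : ∀ m ∈ Finset.range (j+1),
        Gseq v e0 g0 j m 0 * (w2 - lam) ^ (ν + (e0 - (m:ℝ)))
          = (w2 - lam) ^ ν * (Gseq v e0 g0 j m 0 * (w2 - lam) ^ (e0 - m)) := by
      intro m _
      rw [Real.rpow_add hεpos]
      ring
    rw [Finset.sum_congr rfl hterm, ← Finset.mul_sum]
    ring
  have hval : climit * (R * 0
      + ∑ m ∈ Finset.range (j+1), b m * (if ν + (e0 - (m:ℝ)) = 0 then 1 else 0))
      = (if ν = (j:ℝ) - e0 then climit * Gseq v e0 g0 j j 0 else 0) := by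
    have hz : ∑ m ∈ Finset.range j, b m * (if ν + (e0 - (m:ℝ)) = 0 then 1 else 0) = 0 := by
      refine Finset.sum_eq_zero (fun m hm => ?_)
      have hmj : (m:ℝ) < j := by exact_mod_cast Finset.mem_range.mp hm
      rw [if_neg (by intro hcon; linarith), mul_zero]
    rw [mul_zero, zero_add, Finset.sum_range_succ, hz, zero_add]
    by_cases hcase : ν = (j:ℝ) - e0
    · rw [if_pos hcase, if_pos (by rw [hcase]; ring), mul_one]
    · rw [if_neg hcase, if_neg (fun hcon => hcase (by linarith)), mul_zero, mul_zero]
  rw [← hval]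
  exact key.congr' (by filter_upwards [hmem] with lam hlam using heq lam hlam)

lemma neg_one_pow_prod (n : ℕ) (e0 : ℝ) :
    ∏ i ∈ Finset.range n, (2*(e0 - (i:ℝ)))
      = (-1)^n * ∏ i ∈ Finset.range n, (2*((i:ℝ) - e0)) := by
  calc ∏ i ∈ Finset.range n, (2*(e0 - (i:ℝ)))
      = ∏ i ∈ Finset.range n, ((-1) * (2*((i:ℝ) - e0))) :=
        Finset.prod_congr rfl (fun i _ => by ring)
    _ = (-1)^n * ∏ i ∈ Finset.range n, (2*((i:ℝ) - e0)) := by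
        rw [Finset.prod_mul_distrib, Finset.prod_const, Finset.card_range]

theorem Kcoef_tendsto {v : ℝ → ℝ} (hv : ContDiff ℝ ∞ v) (hv0 : 0 < v 0)
    (hv1 : 0 < deriv v 0) (s : ℕ) :
    ∃ C : ℝ, C ≠ 0 ∧ ∀ r : ℕ, s ≤ r →
      Tendsto (fun lam => (v 0 ^ 2 - lam) ^ ((r : ℝ) + 1) * Kcoef v s 0 lam)
        (𝓝[<] (v 0 ^ 2)) (𝓝 (if r = s then C else 0)) := by
  have hvmem : ∀ y, y ∈ Vpos v → 0 < v y := fun y hy => hy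
  have hvne : ∀ y, y ∈ Vpos v → v y ≠ 0 := fun y hy => (hvmem y hy).ne'
  set w2 := v 0 ^ 2 with hw2
  have hw2pos : 0 < w2 := by positivity
  -- data for the four kinds of terms
  set gA : ℝ → ℝ := fun y => 1 / (2 * v y) with hgAdef
  have hgA : ContDiffOn ℝ ∞ gA (Vpos v) :=
    contDiffOn_const.div (contDiffOn_const.mul hv.contDiffOn)
      (fun y hy => by have := hvmem y hy; positivity)
  have hrB : ContDiffOn ℝ ∞ (fun y => -(1 / v y)) (Vpos v) :=
    (contDiffOn_const.div hv.contDiffOn (fun y hy => hvne y hy)).neg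
  have hgD : ContDiffOn ℝ ∞ (fun _ : ℝ => (1:ℝ)) (Vpos v) := contDiffOn_const
  -- the four hf facts
  have hfA : ∀ lam, 0 < lam → ∀ y ∈ Ureg v lam,
      (1 : ℝ) / (2 * v y * ((v y) ^ 2 - lam))
        = (fun _ : ℝ => (1:ℝ)) lam * ((fun _ : ℝ => (0:ℝ)) y
            + gA y * (v y ^ 2 - lam) ^ (-1 : ℝ)) := by
    intro lam hlam y hy
    have hX : 0 < v y ^ 2 - lam := sub_pos.mpr hy.2
    have hvy : 0 < v y := hy.1
    rw [Real.rpow_neg_one]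
    simp only [hgAdef]
    field_simp
    ring
  have hfB : ∀ lam, 0 < lam → ∀ y ∈ Ureg v lam,
      (1 / (2 * lam)) * (((v y) ^ 2 - lam) ^ (-(1 / 2 : ℝ)) - 1 / v y)
        = (fun l : ℝ => 1 / (2 * l)) lam * ((fun z : ℝ => -(1 / v z)) y
            + (fun _ : ℝ => (1:ℝ)) y * (v y ^ 2 - lam) ^ (-(1 / 2) : ℝ)) := by
    intro lam hlam y hy; ring
  have hfC : ∀ lam, 0 < lam → ∀ y ∈ Ureg v lam,
      (1 / (2 * lam)) * (v y * ((v y) ^ 2 - lam) ^ (-(1 / 2 : ℝ)) - 1)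
        = (fun l : ℝ => 1 / (2 * l)) lam * ((fun _ : ℝ => (-1:ℝ)) y
            + v y * (v y ^ 2 - lam) ^ (-(1 / 2) : ℝ)) := by
    intro lam hlam y hy; ring
  have hfD : ∀ lam, 0 < lam → ∀ y ∈ Ureg v lam,
      ((v y) ^ 2 - lam) ^ (-(1 / 2 : ℝ))
        = (fun _ : ℝ => (1:ℝ)) lam * ((fun _ : ℝ => (0:ℝ)) y
            + (fun _ : ℝ => (1:ℝ)) y * (v y ^ 2 - lam) ^ (-(1 / 2) : ℝ)) := by
    intro lam hlam y hy; ring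
  have hcB : Tendsto (fun lam : ℝ => 1 / (2 * lam)) (𝓝[<] w2) (𝓝 (1 / (2 * w2))) := by
    have hca : ContinuousAt (fun lam : ℝ => 1 / (2 * lam)) w2 :=
      ContinuousAt.div continuousAt_const (continuousAt_const.mul continuousAt_id)
        (by positivity)
    exact hca.tendsto.mono_left nhdsWithin_le_nhds
  -- the constant
  set LA : ℝ := Gseq v (-1) gA s s 0 with hLA
  set LC : ℕ → ℝ := fun k => (1 / (2 * w2)) * Gseq v (-(1/2)) v (k-1) (k-1) 0 with hLC
  set LD : ℕ → ℝ := fun k => Gseq v (-(1/2)) (fun _ => (1:ℝ)) (s+1-k) (s+1-k) 0 with hLD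
  refine ⟨LA + ∑ k ∈ Finset.Icc 1 s, (Nat.choose s k : ℝ) * (LC k * LD k), ?_, ?_⟩
  · -- the constant is nonzero
    have hW : 0 < v 0 * deriv v 0 := mul_pos hv0 hv1
    have hsgn : ((-1:ℝ))^s * ((-1:ℝ))^s = 1 := by
      rw [← pow_add]; exact Even.neg_one_pow ⟨s, rfl⟩
    have hQA : (0:ℝ) < ∏ i ∈ Finset.range s, (2*((i:ℝ) - (-1))) :=
      Finset.prod_pos (fun i _ => by have := Nat.cast_nonneg (α := ℝ) i; linarith)
    have hQH : ∀ n : ℕ, (0:ℝ) < ∏ i ∈ Finset.range n, (2*((i:ℝ) - (-(1/2)))) :=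
      fun n => Finset.prod_pos (fun i _ => by have := Nat.cast_nonneg (α := ℝ) i; linarith)
    have hLAval : LA = (-1:ℝ)^s * ((∏ i ∈ Finset.range s, (2*((i:ℝ) - (-1))))
        * (v 0 * deriv v 0)^s * (1/(2 * v 0))) := by
      have e0 := congrFun (Gseq_diag (v := v) (-1:ℝ) gA s) 0
      rw [hLA, e0, neg_one_pow_prod]
      simp only [hgAdef]
      ring
    intro hzero
    have key : (0:ℝ) < (-1:ℝ)^s
        * (LA + ∑ k ∈ Finset.Icc 1 s, ((Nat.choose s k : ℕ):ℝ) * (LC k * LD k)) := by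
      rw [mul_add]
      have h1 : 0 < (-1:ℝ)^s * LA := by
        rw [hLAval, ← mul_assoc, hsgn, one_mul]
        have := pow_pos hW s
        positivity
      have h2 : 0 ≤ (-1:ℝ)^s
          * ∑ k ∈ Finset.Icc 1 s, ((Nat.choose s k : ℕ):ℝ) * (LC k * LD k) := by
        rw [Finset.mul_sum]
        refine Finset.sum_nonneg (fun k hk => ?_)
        obtain ⟨hk1, hks⟩ := Finset.mem_Icc.mp hk
        have e1 := congrFun (Gseq_diag (v := v) (-(1/2):ℝ) v (k-1)) 0
        have e2 := congrFun (Gseq_diag (v := v) (-(1/2):ℝ) (fun _ => (1:ℝ)) (s+1-k)) 0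
        have hLCval : LC k = (1/(2*w2)) * ((∏ i ∈ Finset.range (k-1), (2*(-(1/2) - (i:ℝ))))
            * (v 0 * deriv v 0)^(k-1) * v 0) := by
          simp only [hLC]
          rw [e1]
        have hLDval : LD k = (∏ i ∈ Finset.range (s+1-k), (2*(-(1/2) - (i:ℝ))))
            * (v 0 * deriv v 0)^(s+1-k) * 1 := by
          simp only [hLD]
          rw [e2]
        have hpow1 : (-1:ℝ)^(k-1) * (-1:ℝ)^(s+1-k) = (-1:ℝ)^s := by
          rw [← pow_add]; congr 1; omega
        have hpow2 : (v 0 * deriv v 0)^(k-1) * (v 0 * deriv v 0)^(s+1-k)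
            = (v 0 * deriv v 0)^s := by
          rw [← pow_add]; congr 1; omega
        have step : (-1:ℝ)^s * (((Nat.choose s k : ℕ):ℝ) * (LC k * LD k))
            = ((Nat.choose s k : ℕ):ℝ) * ((1/(2*w2))
                * ((∏ i ∈ Finset.range (k-1), (2*((i:ℝ) - (-(1/2)))))
                  * (∏ i ∈ Finset.range (s+1-k), (2*((i:ℝ) - (-(1/2))))) * v 0)
                * ((v 0 * deriv v 0)^(k-1) * (v 0 * deriv v 0)^(s+1-k))
                * ((-1:ℝ)^s * ((-1:ℝ)^(k-1) * (-1:ℝ)^(s+1-k)))) := by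
          rw [hLCval, hLDval, neg_one_pow_prod (k-1) (-(1/2)), neg_one_pow_prod (s+1-k) (-(1/2))]
          ring
        rw [step, hpow1, hsgn, hpow2, mul_one]
        have p1 := hQH (k-1)
        have p2 := hQH (s+1-k)
        have pW : 0 < (v 0 * deriv v 0)^s := pow_pos hW s
        have hin : 0 < (1/(2*w2)) * ((∏ i ∈ Finset.range (k-1), (2*((i:ℝ) - (-(1/2)))))
            * (∏ i ∈ Finset.range (s+1-k), (2*((i:ℝ) - (-(1/2))))) * v 0)
            * ((v 0 * deriv v 0)^s) :=
          mul_pos (mul_pos (by positivity) (mul_pos (mul_pos p1 p2) hv0)) pW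
        exact mul_nonneg (Nat.cast_nonneg _) hin.le
      linarith
    rw [hzero, mul_zero] at key
    exact lt_irrefl 0 key
  intro r hr
  -- term A tendsto
  have TA := rep_tendsto hv (-1 : ℝ) (by norm_num) hgA contDiffOn_const
      (fun _ : ℝ => (1:ℝ)) (fun lam y => 1 / (2 * v y * ((v y) ^ 2 - lam))) hfA hv0
      s ((r:ℝ)+1) (by have h : (s:ℝ) ≤ r := Nat.cast_le.mpr hr; linarith) tendsto_const_nhds
  have TB := rep_tendsto hv (-(1/2) : ℝ) (by norm_num) hgD hrB
      (fun l : ℝ => 1 / (2 * l))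
      (fun lam y => (1 / (2 * lam)) * (((v y) ^ 2 - lam) ^ (-(1 / 2 : ℝ)) - 1 / v y)) hfB hv0
      s ((r:ℝ)+1) (by have : (s:ℝ) ≤ r := Nat.cast_le.mpr hr; linarith) hcB
  have hifB : ¬ ((r:ℝ)+1 = (s:ℝ) - (-(1/2))) := by
    have : (s:ℝ) ≤ r := Nat.cast_le.mpr hr
    intro hcon
    have hrs : (r:ℝ) = (s:ℝ) - 1/2 := by linarith
    have : ((r:ℕ):ℝ) = (s:ℝ) - 1/2 := hrs
    have h2 : ((2*r:ℕ):ℝ) = 2*(s:ℝ) - 1 := by push_cast; linarith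
    have h3 : (2*r:ℕ) + 1 = 2*s := by exact_mod_cast (by push_cast at h2 ⊢; linarith : ((2*r+1:ℕ):ℝ) = ((2*s:ℕ):ℝ))
    omega
  rw [if_neg hifB] at TB
  -- products
  have TCDind : ∀ k ∈ Finset.Icc 1 s,
      Tendsto (fun lam =>
          ((w2 - lam) ^ (((k-1:ℕ):ℝ)+1/2)
              * iteratedDeriv (k-1) (fun y => (1 / (2 * lam)) * (v y * ((v y) ^ 2 - lam) ^ (-(1 / 2 : ℝ)) - 1)) 0)
            * ((w2 - lam) ^ (((r+1-k:ℕ):ℝ)+1/2)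
              * iteratedDeriv (s+1-k) (fun y => ((v y) ^ 2 - lam) ^ (-(1 / 2 : ℝ))) 0))
        (𝓝[<] w2) (𝓝 (if r = s then LC k * LD k else 0)) := by
    intro k hk
    have hk1 : 1 ≤ k := (Finset.mem_Icc.mp hk).1
    have hks : k ≤ s := (Finset.mem_Icc.mp hk).2
    have TC := rep_tendsto hv (-(1/2) : ℝ) (by norm_num) hv.contDiffOn contDiffOn_const
        (fun l : ℝ => 1 / (2 * l))
        (fun lam y => (1 / (2 * lam)) * (v y * ((v y) ^ 2 - lam) ^ (-(1 / 2 : ℝ)) - 1)) hfC hv0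
        (k-1) (((k-1:ℕ):ℝ)+1/2) (by linarith) hcB
    rw [if_pos (by ring)] at TC
    have TD := rep_tendsto hv (-(1/2) : ℝ) (by norm_num) hgD contDiffOn_const
        (fun _ : ℝ => (1:ℝ))
        (fun lam y => ((v y) ^ 2 - lam) ^ (-(1 / 2 : ℝ))) hfD hv0
        (s+1-k) (((r+1-k:ℕ):ℝ)+1/2)
        (by have : ((s+1-k:ℕ):ℝ) ≤ ((r+1-k:ℕ):ℝ) := Nat.cast_le.mpr (by omega); linarith)
        tendsto_const_nhds
    have := TC.mul TD
    by_cases hrs : r = s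
    · subst hrs
      rw [if_pos (by ring)] at this
      rw [if_pos rfl]
      convert this using 2
      simp only [hLC, hLD]
      ring
    · rw [if_neg (by
        intro hcon
        have : ((r+1-k:ℕ):ℝ) = ((s+1-k:ℕ):ℝ) := by linarith
        have : (r+1-k:ℕ) = (s+1-k:ℕ) := by exact_mod_cast this
        omega)] at this
      rw [if_neg hrs]
      simpa using this
  have Tsum := tendsto_finset_sum (Finset.Icc 1 s) (fun k hk => ((TCDind k hk).const_mul ((Nat.choose s k : ℕ):ℝ)))
  -- assemble
  have TM := (TA.add (TB.const_mul (s:ℝ))).add Tsum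
  have hifA : ((r:ℝ)+1 = (s:ℝ) - (-1)) ↔ (r = s) := by
    constructor
    · intro hcon
      have : (r:ℝ) = (s:ℝ) := by linarith
      exact_mod_cast this
    · intro hrs; subst hrs; ring
  -- eventual equality
  have hmem : Set.Ioo (w2/2) w2 ∈ 𝓝[<] w2 := Ioo_mem_nhdsLT_of_mem ⟨by linarith, le_rfl⟩
  have hev : ∀ lam ∈ Set.Ioo (w2/2) w2,
      ((w2 - lam) ^ ((r:ℝ)+1)
            * iteratedDeriv s (fun y => 1 / (2 * v y * ((v y) ^ 2 - lam))) 0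
          + (s:ℝ) * ((w2 - lam) ^ ((r:ℝ)+1)
            * iteratedDeriv s (fun y => (1 / (2 * lam)) * (((v y) ^ 2 - lam) ^ (-(1 / 2 : ℝ)) - 1 / v y)) 0))
        + ∑ k ∈ Finset.Icc 1 s, ((Nat.choose s k : ℕ):ℝ) *
            (((w2 - lam) ^ (((k-1:ℕ):ℝ)+1/2)
              * iteratedDeriv (k-1) (fun y => (1 / (2 * lam)) * (v y * ((v y) ^ 2 - lam) ^ (-(1 / 2 : ℝ)) - 1)) 0)
            * ((w2 - lam) ^ (((r+1-k:ℕ):ℝ)+1/2)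
              * iteratedDeriv (s+1-k) (fun y => ((v y) ^ 2 - lam) ^ (-(1 / 2 : ℝ))) 0))
      = (w2 - lam) ^ ((r:ℝ)+1) * Kcoef v s 0 lam := by
    intro lam hlam
    have hε : 0 < w2 - lam := by have := hlam.2; linarith
    rw [Kcoef]
    rw [mul_add, mul_add, Finset.mul_sum]
    congr 1
    · ring
    refine Finset.sum_congr rfl (fun k hk => ?_)
    have hk1 : 1 ≤ k := (Finset.mem_Icc.mp hk).1
    have hks : k ≤ s := (Finset.mem_Icc.mp hk).2
    have h1 : ((k-1:ℕ):ℝ) = (k:ℝ) - 1 := by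
      have h : (1:ℕ) ≤ k := hk1
      push_cast [Nat.cast_sub h]; ring
    have h2 : ((r+1-k:ℕ):ℝ) = (r:ℝ) + 1 - k := by
      have hkr : k ≤ r + 1 := by omega
      push_cast [Nat.cast_sub hkr]; ring
    set t1 := iteratedDeriv (k-1)
      (fun y => (1 / (2 * lam)) * (v y * ((v y) ^ 2 - lam) ^ (-(1 / 2 : ℝ)) - 1)) 0 with ht1
    set t2 := iteratedDeriv (s+1-k) (fun y => ((v y) ^ 2 - lam) ^ (-(1 / 2 : ℝ))) 0 with ht2
    rw [h1, h2]
    rw [show ((k:ℝ) - 1 + 1/2) = (k:ℝ) - 1/2 by ring,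
        show ((r:ℝ) + 1 - k + 1/2) = ((r:ℝ) + 1) - ((k:ℝ) - 1/2) by ring]
    rw [Real.rpow_sub hε ((r:ℝ)+1) ((k:ℝ)-1/2)]
    have hne : (w2 - lam) ^ ((k:ℝ) - 1/2) ≠ 0 := by
      exact (Real.rpow_pos_of_pos hε _).ne'
    field_simp
  have hfin := TM.congr' (by filter_upwards [hmem] with lam hlam using hev lam hlam)
  have hval : ((if (r:ℝ) + 1 = (s:ℝ) - -1 then 1 * Gseq v (-1) gA s s 0 else 0) + (s:ℝ) * 0 +
        ∑ c ∈ Finset.Icc 1 s, ((Nat.choose s c : ℕ):ℝ) * (if r = s then LC c * LD c else 0))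
      = (if r = s then (LA + ∑ k ∈ Finset.Icc 1 s, ((Nat.choose s k : ℕ):ℝ) * (LC k * LD k))
          else 0) := by
    by_cases hrs : r = s
    · rw [if_pos hrs, if_pos (hifA.mpr hrs)]
      rw [Finset.sum_congr rfl (fun k _ => by rw [if_pos hrs])]
      rw [← hLA]
      ring
    · rw [if_neg hrs, if_neg (fun hcon => hrs (hifA.mp hcon))]
      rw [Finset.sum_congr rfl (fun k _ => by rw [if_neg hrs])]
      simp
  rw [hval] at hfin
  exact hfin


lemma iteratedDeriv_fin_sum {ι : Type*} (u : Finset ι) (f : ι → ℝ → ℝ)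
    (hf : ∀ i ∈ u, ContDiff ℝ ∞ (f i)) (n : ℕ) :
    iteratedDeriv n (fun y => ∑ i ∈ u, f i y) = fun y => ∑ i ∈ u, iteratedDeriv n (f i) y := by
  induction n with
  | zero => simp [iteratedDeriv_zero]
  | succ n ih =>
    funext y
    rw [iteratedDeriv_succ, ih]
    rw [deriv_fun_sum (fun i hi => ((hf i hi).differentiable_iteratedDeriv n
      (by exact_mod_cast (lt_top_iff_ne_top.mpr (by simp) : (n:ℕ∞) < ⊤))) y)]
    exact Finset.sum_congr rfl (fun i _ => by rw [iteratedDeriv_succ])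

lemma iteratedDeriv_monomial (i : ℕ) :
    ∀ j, iteratedDeriv j (fun y : ℝ => y ^ i)
      = fun y => (Nat.descFactorial i j : ℝ) * y ^ (i - j) := by
  intro j; induction j with
  | zero => simp
  | succ j ih =>
    funext y
    rw [iteratedDeriv_succ, ih, deriv_const_mul _ (differentiableAt_pow _), deriv_pow_field,
      Nat.descFactorial_succ, Nat.sub_sub]
    push_cast
    ring

lemma iteratedDeriv_const_mul' (c : ℝ) (f : ℝ → ℝ) (hf : ContDiff ℝ ∞ f) (n : ℕ) (x : ℝ) :
    iteratedDeriv n (fun y => c * f y) x = c * iteratedDeriv n f x := by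
  rw [← iteratedDerivWithin_univ, ← iteratedDerivWithin_univ]
  exact iteratedDerivWithin_const_mul (Set.mem_univ x) uniqueDiffOn_univ c
    (hf.contDiffWithinAt.of_le (by exact_mod_cast le_top))

noncomputable def jetPoly (N : ℕ) (a : Fin (N+1) → ℝ) : ℝ → ℝ :=
  fun y => ∑ i : Fin (N+1), (a i / (Nat.factorial i.1)) * y ^ (i.1)

lemma jetPoly_contDiff (N : ℕ) (a : Fin (N+1) → ℝ) : ContDiff ℝ (⊤ : ℕ∞) (jetPoly N a) :=
  ContDiff.sum (fun i _ => contDiff_const.mul (contDiff_id.pow _))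

lemma jetPoly_iteratedDeriv (N : ℕ) (a : Fin (N+1) → ℝ) (j : Fin (N+1)) :
    iteratedDeriv j.1 (jetPoly N a) 0 = a j := by
  have hunf : jetPoly N a
      = fun y => ∑ i : Fin (N+1), (a i / (Nat.factorial i.1)) * y ^ (i.1) := rfl
  rw [hunf, iteratedDeriv_fin_sum Finset.univ
    (fun (i : Fin (N+1)) => fun y => (a i / (Nat.factorial i.1)) * y ^ (i.1))
    (fun i _ => by fun_prop) j.1]
  have hterm : ∀ i : Fin (N+1),
      iteratedDeriv j.1 (fun y => (a i / (Nat.factorial i.1)) * y ^ (i.1)) 0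
        = (a i / (Nat.factorial i.1)) * ((Nat.descFactorial i.1 j.1 : ℝ) * 0 ^ (i.1 - j.1)) := by
    intro i
    rw [iteratedDeriv_const_mul' _ (fun y => y ^ (i.1)) (by fun_prop), iteratedDeriv_monomial]
  show (∑ i : Fin (N+1),
    iteratedDeriv j.1 (fun y => a i / (Nat.factorial i.1) * y ^ (i.1)) 0) = a j
  rw [Finset.sum_congr rfl (fun i _ => hterm i)]
  rw [Finset.sum_eq_single j]
  · rw [Nat.sub_self, pow_zero, Nat.descFactorial_self, mul_one]
    rw [div_mul_eq_mul_div, mul_div_assoc, div_self (by exact_mod_cast (Nat.factorial_pos j.1).ne'), mul_one]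
  · intro i _ hij
    rcases Nat.lt_or_ge i.1 j.1 with hlt | hge
    · rw [Nat.descFactorial_eq_zero_iff_lt.mpr hlt]
      simp
    · have : j.1 < i.1 := by
        rcases Nat.eq_or_lt_of_le hge with heq | hlt'
        · exact absurd (Fin.ext heq.symm) hij
        · exact hlt'
      rw [zero_pow (by omega)]
      simp
  · intro hj; exact absurd (Finset.mem_univ j) hj

/-- If a smooth function `F` on the open set
`Ω = {(a₀,…,a_N) : a₀ > 0, a₁ > 0}` of the jet space satisfies
`∑_{s=0}^{N} K^s(x, λ) ∂F/∂a_s(v(x), v′(x), …, v^{(N)}(x)) = 0` for every smooth `v`,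
every point `x` whose jet lies in `Ω` and every `λ ∈ (0, v(x)²)`, then `F` is constant
on `Ω`. -/
theorem annihilated_implies_constant (N : ℕ) (F : (Fin (N + 1) → ℝ) → ℝ)
    (Ω : Set (Fin (N + 1) → ℝ))
    (hΩ : Ω = {a : Fin (N + 1) → ℝ | 0 < a 0 ∧ 0 < a 1})
    (hF : ContDiffOn ℝ (⊤ : ℕ∞) F Ω)
    (h : ∀ v : ℝ → ℝ, ContDiff ℝ (⊤ : ℕ∞) v → ∀ x : ℝ,
        (fun i : Fin (N + 1) => iteratedDeriv i.val v x) ∈ Ω →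
        ∀ lam ∈ Set.Ioo (0 : ℝ) ((v x) ^ 2),
          ∑ s : Fin (N + 1),
            Kcoef v s.val x lam
              * fderiv ℝ F (fun i : Fin (N + 1) => iteratedDeriv i.val v x)
                  (Pi.single s 1) = 0) :
    ∀ a ∈ Ω, ∀ b ∈ Ω, F a = F b := by
  have hΩopen : IsOpen Ω := by
    rw [hΩ, Set.setOf_and]
    exact (isOpen_lt continuous_const (continuous_apply 0)).inter
      (isOpen_lt continuous_const (continuous_apply 1))
  have hΩconv : Convex ℝ Ω := by
    rw [hΩ, Set.setOf_and]
    exact (convex_halfSpace_gt ⟨fun x y => rfl, fun c x => rfl⟩ 0).inter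
      (convex_halfSpace_gt ⟨fun x y => rfl, fun c x => rfl⟩ 0)
  -- the gradient of F vanishes on Ω
  have grad : ∀ a ∈ Ω, ∀ u : Fin (N+1) → ℝ, fderiv ℝ F a u = 0 := by
    intro a haΩ
    have haΩ' := haΩ
    rw [hΩ] at haΩ'
    obtain ⟨ha0, ha1⟩ := haΩ'
    obtain ⟨v, hvsm, hjet, hv0pos, hv1pos⟩ : ∃ v : ℝ → ℝ, ContDiff ℝ (⊤ : ℕ∞) v
        ∧ (fun i : Fin (N + 1) => iteratedDeriv i.val v 0) = a
        ∧ 0 < v 0 ∧ 0 < deriv v 0 := by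
      rcases Nat.eq_zero_or_pos N with hN | hN
      · subst hN
        refine ⟨fun y => a 0 + y, contDiff_const.add contDiff_id, ?_, ?_, ?_⟩
        · funext i
          have hi : i = 0 := Fin.ext (by omega)
          subst hi
          simp
        · simpa using ha0
        · have hd : HasDerivAt (fun y => a 0 + y) 1 0 := (hasDerivAt_id 0).const_add (a 0)
          rw [hd.deriv]
          norm_num
      · refine ⟨jetPoly N a, jetPoly_contDiff N a,
          funext (jetPoly_iteratedDeriv N a), ?_, ?_⟩
        · have h0 := jetPoly_iteratedDeriv N a 0
          rw [Fin.val_zero, iteratedDeriv_zero] at h0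
          rw [h0]; exact ha0
        · have h1 := jetPoly_iteratedDeriv N a ⟨1, by omega⟩
          have hval : ((⟨1, by omega⟩ : Fin (N+1)) : ℕ) = 1 := rfl
          rw [hval, iteratedDeriv_one] at h1
          rw [h1]
          have hone : (⟨1, by omega⟩ : Fin (N+1)) = 1 := by
            apply Fin.ext
            rw [Fin.val_one']
            exact (Nat.mod_eq_of_lt (by omega)).symm
          rw [hone]
          exact ha1
    have hvsm' : ContDiff ℝ ∞ v := hvsm.of_le (by simp)
    have hw2pos : 0 < v 0 ^ 2 := by positivity
    have hsum0 : ∀ lam ∈ Set.Ioo (0:ℝ) (v 0 ^ 2),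
        ∑ p : Fin (N+1), Kcoef v p.val 0 lam * fderiv ℝ F a (Pi.single p 1) = 0 := by
      intro lam hlam
      have hh := h v hvsm 0 (by rw [hjet]; exact haΩ) lam hlam
      rwa [hjet] at hh
    have core : ∀ s : Fin (N+1),
        (∀ s' : Fin (N+1), s.1 < s'.1 → fderiv ℝ F a (Pi.single s' 1) = 0) →
        fderiv ℝ F a (Pi.single s 1) = 0 := by
      intro s IH
      obtain ⟨C, hC0, hCt⟩ := Kcoef_tendsto hvsm' hv0pos hv1pos s.1
      have hΦ0 : Tendsto (fun lam => (v 0 ^ 2 - lam) ^ ((s.1:ℝ)+1)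
          * ∑ p : Fin (N+1), Kcoef v p.val 0 lam * fderiv ℝ F a (Pi.single p 1))
          (𝓝[<] (v 0 ^ 2)) (𝓝 0) := by
        have hmem : Set.Ioo (v 0 ^ 2 / 2) (v 0 ^ 2) ∈ 𝓝[<] (v 0 ^ 2) :=
          Ioo_mem_nhdsLT_of_mem ⟨by linarith, le_rfl⟩
        have hev : (fun _ : ℝ => (0:ℝ)) =ᶠ[𝓝[<] (v 0 ^ 2)]
            (fun lam => (v 0 ^ 2 - lam) ^ ((s.1:ℝ)+1)
              * ∑ p : Fin (N+1), Kcoef v p.val 0 lam * fderiv ℝ F a (Pi.single p 1)) := by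
          filter_upwards [hmem] with lam hlam
          rw [hsum0 lam ⟨by linarith [hlam.1], hlam.2⟩, mul_zero]
        exact Tendsto.congr' hev tendsto_const_nhds
      have hΦlim : Tendsto (fun lam => (v 0 ^ 2 - lam) ^ ((s.1:ℝ)+1)
          * ∑ p : Fin (N+1), Kcoef v p.val 0 lam * fderiv ℝ F a (Pi.single p 1))
          (𝓝[<] (v 0 ^ 2)) (𝓝 (C * fderiv ℝ F a (Pi.single s 1))) := by
        have hterm : ∀ p : Fin (N+1), p ∈ (Finset.univ : Finset (Fin (N+1))) →
            Tendsto (fun lam => (v 0 ^ 2 - lam) ^ ((s.1:ℝ)+1)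
                * (Kcoef v p.val 0 lam * fderiv ℝ F a (Pi.single p 1)))
              (𝓝[<] (v 0 ^ 2))
              (𝓝 (if p = s then C * fderiv ℝ F a (Pi.single s 1) else 0)) := by
          intro p _
          by_cases hps : p = s
          · subst hps
            rw [if_pos rfl]
            have := (hCt p.1 le_rfl).mul_const (fderiv ℝ F a (Pi.single p 1))
            rw [if_pos rfl] at this
            exact this.congr (fun lam => by ring)
          · rw [if_neg hps]
            rcases lt_or_ge s.1 p.1 with hlt | hge
            · have hz : fderiv ℝ F a (Pi.single p 1) = 0 := IH p hlt
              have : (fun lam => (v 0 ^ 2 - lam) ^ ((s.1:ℝ)+1)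
                  * (Kcoef v p.val 0 lam * fderiv ℝ F a (Pi.single p 1)))
                  = fun _ => (0:ℝ) := by
                funext lam; rw [hz]; ring
              rw [this]
              exact tendsto_const_nhds
            · obtain ⟨Cp, hCp0, hCpt⟩ := Kcoef_tendsto hvsm' hv0pos hv1pos p.1
              have hne : ¬ (s.1 = p.1) := by
                intro hcon
                exact hps (Fin.ext hcon.symm)
              have := (hCpt s.1 hge).mul_const (fderiv ℝ F a (Pi.single p 1))
              rw [if_neg hne, zero_mul] at this
              exact this.congr (fun lam => by ring)
        have hsumT := tendsto_finset_sum (Finset.univ : Finset (Fin (N+1))) hterm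
        have hval : ∑ p : Fin (N+1), (if p = s then C * fderiv ℝ F a (Pi.single s 1) else 0)
            = C * fderiv ℝ F a (Pi.single s 1) := by
          rw [Finset.sum_eq_single s (fun p _ hps => if_neg hps) (fun hs => absurd (Finset.mem_univ s) hs)]
          rw [if_pos rfl]
        rw [hval] at hsumT
        exact hsumT.congr (fun lam => by rw [← Finset.mul_sum])
      have hCD := tendsto_nhds_unique hΦlim hΦ0
      exact (mul_eq_zero.mp hCD).resolve_left hC0
    have hDzero : ∀ s : Fin (N+1), fderiv ℝ F a (Pi.single s 1) = 0 := by
      have hstep : ∀ t : ℕ, ∀ s : Fin (N+1), N ≤ s.1 + t → fderiv ℝ F a (Pi.single s 1) = 0 := by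
        intro t
        induction t with
        | zero => exact fun s hs => core s (fun s' hs' => absurd s'.2 (by omega))
        | succ t ih => exact fun s hs => core s (fun s' hs' => ih s' (by omega))
      exact fun s => hstep N s (by omega)
    intro u
    have hsingle : ∀ i : Fin (N+1), (fun j => if i = j then (1:ℝ) else 0) = Pi.single i (1:ℝ) := by
      intro i; funext j
      rw [Pi.single_apply]
      by_cases hij : j = i
      · simp [hij]
      · simp [hij, Ne.symm hij]
    have hu : u = ∑ i : Fin (N+1), u i • (Pi.single i (1:ℝ) : Fin (N+1) → ℝ) :=
      (pi_eq_sum_univ u).trans (Finset.sum_congr rfl (fun i _ => by rw [hsingle i]))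
    rw [hu, map_sum]
    refine Finset.sum_eq_zero (fun i _ => ?_)
    rw [map_smul, hDzero i, smul_zero]
  -- conclude constancy by the mean value inequality on the convex set Ω
  intro a ha b hb
  have hdiff : DifferentiableOn ℝ F Ω := hF.differentiableOn (by simp)
  have hbound : ∀ x ∈ Ω, ‖fderivWithin ℝ F Ω x‖ ≤ 0 := by
    intro x hx
    rw [fderivWithin_of_isOpen hΩopen hx]
    have hzero : fderiv ℝ F x = 0 := ContinuousLinearMap.ext (fun u => by
      rw [grad x hx u]; rfl)
    rw [hzero]
    simp
  have hmvt := hΩconv.norm_image_sub_le_of_norm_fderivWithin_le hdiff hbound hb ha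
  rw [zero_mul] at hmvt
  exact sub_eq_zero.mp (norm_le_zero_iff.mp hmvt)
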